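/- arXiv:1602.02407 — 2 statements merged into one kernel-verified Lean document; each statement's English description precedes it below -/
import Mathlib

section
/- Let p be a prime. Then M_p^(1) ⊆ p · 𝒩_p; that is, for every positive integer n divisible by p but not by p² satisfying S_n(n) ≡ p (mod n), the quotient n/p belongs to 𝒩_p. -/
/-- `S k n = ∑_{i=1}^{n} i^k`. -/
def S (k n : ℕ) : ℕ := ∑ i ∈ Finset.Icc 1 n, i ^ k

/-- The set of primes `Q_p`, defined by well-founded recursion (here as an inductive
predicate, which is the unique fixed point since all prime divisors of `q - 1` are
smaller than `q`): a prime `q` belongs to `Q_p` iff `q - 1` is squarefree,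
`p - 1 ∤ q - 1`, and every prime divisor `t` of `q - 1` satisfies `t = p` or `t ∈ Q_p`. -/
inductive QpMem (p : ℕ) : ℕ → Prop
  | intro (q : ℕ) (hq : Nat.Prime q) (h1 : Squarefree (q - 1))
      (h2 : ¬ (p - 1) ∣ (q - 1))
      (h3 : ∀ t : ℕ, Nat.Prime t → t ∣ q - 1 → t ≠ p → QpMem p t) : QpMem p q

/-!
For a prime `q ∣ n`, the sum `S_n(n)` runs `n / q` times over all residues mod `q`, so
`S_n(n) ≡ (n / q) ∑_{x ∈ 𝔽_q} x^n ≡ -(n / q) · [q - 1 ∣ n] (mod q)`.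
Comparing with `S_n(n) ≡ p`: if `q² ∣ n` the right side vanishes, forcing `q = p`, which is
excluded, so `n` is squarefree; if `q ≠ p` the right side must be nonzero, so `q - 1 ∣ n`;
for `q = p` it must vanish although `p ∤ n / p`, so `p - 1 ∤ n`.
These three closure properties of `n` give `q ∈ Q_p` for every prime `q ∣ n / p`,
by strong induction on `q`, since every prime factor of `q - 1` again divides `n`.
-/

open Finset

lemma ZMod.sum_range_natCast {M : Type*} [AddCommMonoid M] (q : ℕ) [NeZero q]
    (f : ZMod q → M) : ∑ i ∈ range q, f i = ∑ x, f x := by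
  obtain ⟨q, rfl⟩ : ∃ q', q = q' + 1 := Nat.exists_eq_succ_of_ne_zero (NeZero.ne q)
  rw [← Fin.sum_univ_eq_sum_range (fun i => f i)]
  exact Fintype.sum_congr _ _ fun i => congrArg f (Fin.cast_val_eq_self i)

lemma ZMod.sum_range_mul_natCast {M : Type*} [AddCommMonoid M] (q : ℕ) [NeZero q]
    (f : ZMod q → M) (m : ℕ) : ∑ i ∈ range (q * m), f i = m • ∑ x, f x := by
  induction m with
  | zero => simp
  | succ m ih =>
    rw [mul_add_one, sum_range_add, ih, succ_nsmul, ← ZMod.sum_range_natCast]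
    simp

lemma ZMod.sum_pow_eq (q : ℕ) [Fact q.Prime] {k : ℕ} (hk : k ≠ 0) :
    ∑ x : ZMod q, x ^ k = if q - 1 ∣ k then -1 else 0 := by
  classical
  have hunits := FiniteField.sum_pow_units (ZMod q) k
  rw [ZMod.card] at hunits
  rw [← hunits, ← sum_filter_of_ne (p := (· ≠ 0)) fun x _ hx h0 => hx (by simp [h0, hk]),
    sum_subtype _ (p := (· ≠ 0)) (fun _ => by simp)]
  exact (Fintype.sum_equiv unitsEquivNeZero _ _ fun _ => rfl).symm

lemma natCast_S_mul (q : ℕ) [NeZero q] (k m : ℕ) :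
    (S k (q * m) : ZMod q) = m * ∑ x : ZMod q, x ^ k := by
  rw [S, ← Ico_add_one_right_eq_Icc, sum_Ico_eq_sum_range, Nat.add_sub_cancel]
  push_cast
  rw [ZMod.sum_range_mul_natCast q (fun x => (1 + x) ^ k), nsmul_eq_mul]
  congr 1
  exact Fintype.sum_equiv (Equiv.addLeft 1) _ _ fun _ => rfl

lemma natCast_S_self {q n : ℕ} (hq : q.Prime) (hqn : q ∣ n) (hn : n ≠ 0) :
    (S n n : ZMod q) = (n / q : ℕ) * if q - 1 ∣ n then -1 else 0 := by
  have : Fact q.Prime := ⟨hq⟩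
  obtain ⟨m, rfl⟩ := hqn
  rw [Nat.mul_div_cancel_left m hq.pos, natCast_S_mul, ZMod.sum_pow_eq q hn]

section SModEq

variable {p n : ℕ}

lemma natCast_prime_eq_of_S_modEq (hn : n ≠ 0) (h : S n n ≡ p [MOD n]) {q : ℕ}
    (hq : q.Prime) (hqn : q ∣ n) :
    (p : ZMod q) = (n / q : ℕ) * if q - 1 ∣ n then -1 else 0 := by
  rw [← natCast_S_self hq hqn hn, (ZMod.natCast_eq_natCast_iff _ _ _).mpr (h.of_dvd hqn)]

lemma eq_of_S_modEq (hp : p.Prime) (hn : n ≠ 0) (h : S n n ≡ p [MOD n]) {q : ℕ}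
    (hq : q.Prime) (hqn : q ∣ n)
    (h0 : (n / q : ℕ) * (if q - 1 ∣ n then -1 else 0 : ZMod q) = 0) : q = p :=
  (Nat.prime_dvd_prime_iff_eq hq hp).mp <| (ZMod.natCast_eq_zero_iff _ _).mp <|
    (natCast_prime_eq_of_S_modEq hn h hq hqn).trans h0

lemma squarefree_of_S_modEq (hp : p.Prime) (hn : n ≠ 0) (h : S n n ≡ p [MOD n])
    (h2 : ¬ p ^ 2 ∣ n) : Squarefree n := by
  rw [Nat.squarefree_iff_prime_squarefree]
  intro q hq hqq
  have hqn : q ∣ n := (dvd_mul_right q q).trans hqq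
  have hq0 : ((n / q : ℕ) : ZMod q) = 0 :=
    (ZMod.natCast_eq_zero_iff _ _).mpr ((Nat.dvd_div_iff_mul_dvd hqn).mpr hqq)
  obtain rfl := eq_of_S_modEq hp hn h hq hqn (by rw [hq0, zero_mul])
  exact h2 (by rwa [sq])

lemma sub_one_dvd_of_S_modEq (hp : p.Prime) (hn : n ≠ 0) (h : S n n ≡ p [MOD n]) {q : ℕ}
    (hq : q.Prime) (hqn : q ∣ n) (hqp : q ≠ p) : q - 1 ∣ n := by
  by_contra hdvd
  exact hqp (eq_of_S_modEq hp hn h hq hqn (by rw [if_neg hdvd, mul_zero]))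

lemma not_sub_one_dvd_of_S_modEq (hp : p.Prime) (hn : n ≠ 0) (h : S n n ≡ p [MOD n])
    (h1 : p ∣ n) (h2 : ¬ p ^ 2 ∣ n) : ¬ p - 1 ∣ n := by
  intro hdvd
  have : Fact p.Prime := ⟨hp⟩
  have hpeq := natCast_prime_eq_of_S_modEq hn h hp h1
  rw [if_pos hdvd, ZMod.natCast_self, mul_neg_one, eq_comm, neg_eq_zero,
    ZMod.natCast_eq_zero_iff, Nat.dvd_div_iff_mul_dvd h1] at hpeq
  exact h2 (by rwa [sq])

end SModEq

lemma qpMem_of_sub_one_dvd {p n : ℕ} (hsq : Squarefree n) (hpn : ¬ p - 1 ∣ n)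
    (hclosed : ∀ q, q.Prime → q ∣ n → q ≠ p → q - 1 ∣ n) {q : ℕ} (hq : q.Prime)
    (hqn : q ∣ n) (hqp : q ≠ p) : QpMem p q := by
  induction q using Nat.strong_induction_on with
  | _ q ih =>
    have hq1 := hclosed q hq hqn hqp
    refine QpMem.intro q hq (hsq.squarefree_of_dvd hq1) (fun hd => hpn (hd.trans hq1)) ?_
    intro t ht htq htp
    have htlt : t < q :=
      (Nat.le_of_dvd (Nat.sub_pos_of_lt hq.one_lt) htq).trans_lt (Nat.sub_lt hq.pos one_pos)
    exact ih t htlt ht (htq.trans hq1) htp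

/-- For a prime `p`, `M_p^(1) ⊆ p · 𝒩_p`: if `p` divides `n` exactly once and
`S_n(n) ≡ p (mod n)`, then `n / p ∈ 𝒩_p`, i.e. `n / p` is squarefree, `p - 1 ∤ n / p`,
and every prime divisor of `n / p` belongs to `Q_p`. -/
theorem stmt_5 (p : ℕ) (hp : p.Prime) (n : ℕ) (hn : 0 < n)
    (h : S n n ≡ p [MOD n]) (h1 : p ∣ n) (h2 : ¬ p ^ 2 ∣ n) :
    Squarefree (n / p) ∧ ¬ (p - 1) ∣ (n / p) ∧
      ∀ q : ℕ, Nat.Prime q → q ∣ n / p → QpMem p q := by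
  have hsq := squarefree_of_S_modEq hp hn.ne' h h2
  have hpn := not_sub_one_dvd_of_S_modEq hp hn.ne' h h1 h2
  have hdiv : n / p ∣ n := Nat.div_dvd_of_dvd h1
  have hpp : ¬ p ∣ n / p := fun hd => h2 (by rw [sq]; exact (Nat.dvd_div_iff_mul_dvd h1).mp hd)
  refine ⟨hsq.squarefree_of_dvd hdiv, fun hd => hpn (hd.trans hdiv), fun q hq hqm => ?_⟩
  exact qpMem_of_sub_one_dvd hsq hpn (fun _ => sub_one_dvd_of_S_modEq hp hn.ne' h)
    hq (hqm.trans hdiv) (by rintro rfl; exact hpp hqm)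
end

section
/- Let p be a prime and let n be a positive integer. Then n ∈ M_p^(1) ∪ M_p^(2) if and only if p divides n, n/p is a weak primary pseudoperfect number, and p ∈ 𝔐_{n/p}. -/
/-!
The key input is the classical congruence
`S_k(n) ≡ -∑_{q ∣ n prime, (q - 1) ∣ k} n / q (mod n)` for `k ≥ 1` (`k` even when `n` is),
proved one prime power at a time: `S_k(q) ≡ -[(q - 1) ∣ k] (mod q)` by summing over
`(ZMod q)ˣ`, and `S_k(q^(e+1)) ≡ q S_k(q^e) (mod q^(e+1))` by expanding `(j + t q^e)^k` to
first order; the first-order terms add up to a multiple of `k q^e (0 + 1 + ⋯ + (q - 1))`,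
which is why `k` must be even when `q = 2`.
For `k = n` the congruence `S_n(n) ≡ p (mod n)` therefore amounts to the local conditions
`q^(v_q n) ∣ p + [(q - 1) ∣ n] n / q` for all primes `q ∣ n`. At `q = p` they force
`v_p n ≤ 2`, and after cancelling `p` they become the local conditions
`q^(v_q N) ∣ 1 + N / q` that characterise `N = n / p ∈ 𝒲`.
-/

open Finset

/-- The set `𝒲` of weak primary pseudoperfect numbers: positive integers `n` with
`∑_{p ∣ n, p prime} n/p + 1 ≡ 0 (mod n)`. -/
def W : Set ℕ := {n : ℕ | 0 < n ∧ n ∣ (∑ q ∈ n.primeFactors, n / q) + 1}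

/-- The set `𝔐_Q = {m ≥ 1 : S_{Qm}(Qm) ≡ m (mod Qm)}`. -/
def frakM (Q : ℕ) : Set ℕ := {m : ℕ | 0 < m ∧ S (Q * m) (Q * m) ≡ m [MOD Q * m]}

lemma add_pow_succ_of_sq_eq_zero {R : Type*} [CommRing R] {a : R} (ha : a ^ 2 = 0)
    (b : R) (k : ℕ) : (b + a) ^ (k + 1) = b ^ (k + 1) + (k + 1) * a * b ^ k := by
  induction k with
  | zero => simp [add_comm]
  | succ k ih =>
    rw [pow_succ, ih]
    push_cast
    linear_combination ((k : R) + 1) * b ^ k * ha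

lemma sum_range_mul {M : Type*} [AddCommMonoid M] (f : ℕ → M) (m d : ℕ) :
    ∑ i ∈ range (m * d), f i = ∑ t ∈ range m, ∑ j ∈ range d, f (t * d + j) := by
  induction m with
  | zero => simp
  | succ m ih => rw [add_one_mul, sum_range_add, ih, sum_range_succ]

lemma prime_dvd_sum_range_mul {q k : ℕ} (hq : q.Prime) (h2 : q = 2 → 2 ∣ k) :
    q ∣ (∑ t ∈ range q, t) * k := by
  rcases hq.eq_two_or_odd' with rfl | hodd
  · simpa [sum_range_succ] using h2 rfl
  · have hcop : Nat.Coprime q 2 := Nat.Coprime.symm (Nat.coprime_two_left.2 hodd)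
    refine hcop.dvd_of_dvd_mul_right ?_
    rw [mul_right_comm, sum_range_id_mul_two, mul_assoc]
    exact dvd_mul_right _ _

lemma S_eq_sum_range (k n : ℕ) : S k n = ∑ i ∈ range n, (i + 1) ^ k := by
  rw [S, range_eq_Ico, sum_Ico_add' (· ^ k), zero_add, Ico_add_one_right_eq_Icc]

lemma S_mul_cast_of_sq_eq_zero {R : Type*} [CommRing R] {c : ℕ} (hc : (c : R) ^ 2 = 0)
    (m k : ℕ) (hsum : (∑ t ∈ range m, (t : R)) * k * c = 0) :
    (S k (m * c) : R) = m * S k c := by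
  obtain _ | l := k
  · simp [S]
  have hterm : ∀ t j : ℕ, ((t : R) * c + j + 1) ^ (l + 1)
      = (j + 1) ^ (l + 1) + t * ((l + 1) * c * (j + 1) ^ l) := by
    intro t j
    rw [show (t : R) * c + j + 1 = j + 1 + t * c by ring,
      add_pow_succ_of_sq_eq_zero (by rw [mul_pow, hc, mul_zero])]
    ring
  rw [S_eq_sum_range, S_eq_sum_range, sum_range_mul]
  push_cast at hsum ⊢
  simp only [hterm, sum_add_distrib, ← mul_sum, sum_const, card_range, nsmul_eq_mul, ← sum_mul]
  linear_combination (∑ j ∈ range c, ((j : R) + 1) ^ l) * hsum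

lemma S_mul_cast {R : Type*} [CommRing R] {M : ℕ} (hM : (M : R) = 0) (k m : ℕ) :
    (S k (m * M) : R) = m * S k M :=
  S_mul_cast_of_sq_eq_zero (by simp [hM]) m k (by simp [hM])

lemma S_prime_cast {q k : ℕ} (hq : q.Prime) (hk : k ≠ 0) :
    (S k q : ZMod q) = if (q - 1) ∣ k then -1 else 0 := by
  have : Fact q.Prime := ⟨hq⟩
  have hunits : ∑ v ∈ Ico 1 q, (v : ZMod q) ^ k = ∑ u : (ZMod q)ˣ, (u : ZMod q) ^ k :=
    sum_bij'
      (fun v hv ↦ Units.mk0 (v : ZMod q) (mt (ZMod.natCast_eq_zero_iff v q).mp (by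
        grind [Nat.not_dvd_of_pos_of_lt])))
      (fun u _ ↦ (u : ZMod q).val)
      (fun _ _ ↦ mem_univ _)
      (fun u _ ↦ by grind [u.ne_zero, ZMod.val_ne_zero, ZMod.val_lt])
      (fun v hv ↦ by simp [ZMod.val_cast_of_lt (mem_Ico.mp hv).2])
      (fun u _ ↦ Units.ext (ZMod.natCast_zmod_val _))
      (fun _ _ ↦ rfl)
  rw [S, ← Ico_insert_right hq.one_lt.le, sum_insert (by simp)]
  push_cast
  rw [hunits, FiniteField.sum_pow_units, ZMod.card, ZMod.natCast_self, zero_pow hk, zero_add]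

lemma S_prime_pow_succ_modEq {q e k : ℕ} (hq : q.Prime) (he : e ≠ 0)
    (h2 : q = 2 → 2 ∣ k) : S k (q ^ (e + 1)) ≡ q * S k (q ^ e) [MOD q ^ (e + 1)] := by
  rw [← ZMod.natCast_eq_natCast_iff, Nat.cast_mul, pow_succ' q e]
  refine S_mul_cast_of_sq_eq_zero ?_ q k ?_
  · rw [← Nat.cast_pow, ← pow_mul, ZMod.natCast_eq_zero_iff, ← pow_succ']
    exact pow_dvd_pow q (by omega)
  · obtain ⟨a, ha⟩ := prime_dvd_sum_range_mul hq h2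
    rw [← Nat.cast_sum, ← Nat.cast_mul, ← Nat.cast_mul, ha, ZMod.natCast_eq_zero_iff]
    exact ⟨a, by ring⟩

lemma prime_pow_dvd_S_add {q k : ℕ} (hq : q.Prime) (hk : k ≠ 0) (h2 : q = 2 → 2 ∣ k)
    (e : ℕ) :
    q ^ e ∣ S k (q ^ e) + if (q - 1) ∣ k then q ^ (e - 1) else 0 := by
  induction e with
  | zero => simp
  | succ e ih =>
    rcases eq_or_ne e 0 with rfl | he
    · rw [zero_add, pow_one, pow_zero, ← ZMod.natCast_eq_zero_iff]
      push_cast [apply_ite (Nat.cast : ℕ → ZMod q), S_prime_cast hq hk]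
      split_ifs <;> simp
    · rw [((S_prime_pow_succ_modEq hq he h2).add_right _).dvd_iff dvd_rfl, Nat.add_sub_cancel]
      have := mul_dvd_mul_left q ih
      rwa [mul_add, mul_ite, mul_zero, ← pow_succ', ← pow_succ',
        Nat.sub_add_cancel (Nat.one_le_iff_ne_zero.2 he)] at this

lemma ordProj_dvd_div_of_ne {n q r : ℕ} (hr : r.Prime) (hrn : r ∣ n) (hqr : q ≠ r) :
    ordProj[q] n ∣ n / r := by
  have : (n / r).factorization q = n.factorization q := by
    simp [Nat.factorization_div hrn, hr.factorization, hqr.symm]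
  rw [← this]
  exact Nat.ordProj_dvd _ _

lemma dvd_of_forall_ordProj_dvd {n a : ℕ} (hn : n ≠ 0)
    (h : ∀ q ∈ n.primeFactors, ordProj[q] n ∣ a) : n ∣ a := by
  rcases eq_or_ne a 0 with rfl | ha
  · exact dvd_zero n
  refine (Nat.factorization_prime_le_iff_dvd hn ha).mp fun q hq ↦ ?_
  by_cases hqn : q ∣ n
  · exact (hq.pow_dvd_iff_le_factorization ha).mp (h q (Nat.mem_primeFactors.2 ⟨hq, hqn, hn⟩))
  · simp [Nat.factorization_eq_zero_of_not_dvd hqn]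

lemma dvd_add_sum_div_iff {n a : ℕ} (hn : n ≠ 0) {s : Finset ℕ} (hs : s ⊆ n.primeFactors) :
    n ∣ a + ∑ r ∈ s, n / r ↔
      ∀ q ∈ n.primeFactors, ordProj[q] n ∣ a + if q ∈ s then n / q else 0 := by
  have hrest : ∀ q ∈ n.primeFactors, ordProj[q] n ∣ ∑ r ∈ s.erase q, n / r := fun q _ ↦
    dvd_sum fun r hr ↦
      have hr' := hs (mem_of_mem_erase hr)
      ordProj_dvd_div_of_ne (Nat.prime_of_mem_primeFactors hr') (Nat.dvd_of_mem_primeFactors hr')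
        (ne_of_mem_erase hr).symm
  have hsplit : ∀ q, a + ∑ r ∈ s, n / r =
      (a + if q ∈ s then n / q else 0) + ∑ r ∈ s.erase q, n / r := by
    intro q
    split_ifs with hq
    · rw [← add_sum_erase s _ hq, add_assoc]
    · rw [erase_eq_of_notMem hq, add_zero]
  refine ⟨fun h q hq ↦ ?_, fun h ↦ dvd_of_forall_ordProj_dvd hn fun q hq ↦ ?_⟩
  · rw [← Nat.dvd_add_left (hrest q hq), ← hsplit]
    exact (Nat.ordProj_dvd n q).trans h
  · rw [hsplit q]
    exact dvd_add (h q hq) (hrest q hq)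

lemma dvd_S_add_sum_div {n k : ℕ} (hn : n ≠ 0) (hk : k ≠ 0) (h2 : 2 ∣ n → 2 ∣ k) :
    n ∣ S k n + ∑ q ∈ n.primeFactors with (q - 1) ∣ k, n / q := by
  rw [dvd_add_sum_div_iff hn (filter_subset _ _)]
  intro q hq
  obtain ⟨hqp, hqn, -⟩ := Nat.mem_primeFactors.mp hq
  simp only [mem_filter, hq, true_and]
  set e := n.factorization q
  set m := ordCompl[q] n
  have hnm : n = m * q ^ e := by rw [mul_comm, Nat.ordProj_mul_ordCompl_eq_self]
  have hdiv : n / q = m * q ^ (e - 1) := by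
    refine Nat.div_eq_of_eq_mul_left hqp.pos ?_
    rw [mul_assoc, ← pow_succ, Nat.sub_add_cancel (hqp.factorization_pos_of_dvd hn hqn), ← hnm]
  have hS : S k n ≡ m * S k (q ^ e) [MOD q ^ e] := by
    have := S_mul_cast (R := ZMod (q ^ e)) (ZMod.natCast_self _) k m
    rwa [← hnm, ← Nat.cast_mul, ZMod.natCast_eq_natCast_iff] at this
  rw [(hS.add_right _).dvd_iff dvd_rfl, hdiv, ← mul_zero m, ← mul_ite, ← mul_add]
  exact dvd_mul_of_dvd_right (prime_pow_dvd_S_add hqp hk (fun h ↦ h2 (h ▸ hqn)) e) m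

lemma S_modEq_iff {n k a : ℕ} (hn : n ≠ 0) (hk : k ≠ 0) (h2 : 2 ∣ n → 2 ∣ k) :
    S k n ≡ a [MOD n] ↔
      ∀ q ∈ n.primeFactors, ordProj[q] n ∣ a + if (q - 1) ∣ k then n / q else 0 := by
  set T := ∑ q ∈ n.primeFactors with (q - 1) ∣ k, n / q
  have hT : S k n + T ≡ 0 [MOD n] := Nat.modEq_zero_iff_dvd.2 (dvd_S_add_sum_div hn hk h2)
  have : S k n ≡ a [MOD n] ↔ n ∣ a + T := by
    rw [← Nat.modEq_zero_iff_dvd]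
    exact ⟨fun h ↦ (h.symm.add_right T).trans hT,
      fun h ↦ Nat.ModEq.add_right_cancel' T (hT.trans h.symm)⟩
  rw [this, dvd_add_sum_div_iff hn (filter_subset _ _)]
  exact forall₂_congr fun q hq ↦ by simp only [mem_filter, hq, true_and]

lemma factorization_le_two_of_ordProj_dvd {p n : ℕ} {c : Prop} [Decidable c] (hp : p.Prime)
    (hn : n ≠ 0) (h : ordProj[p] n ∣ p + if c then n / p else 0) : n.factorization p ≤ 2 := by
  by_contra! h3
  have hsq : p ^ 2 ∣ n / p := Nat.dvd_div_of_mul_dvd <| by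
    rw [← pow_succ']
    exact (hp.pow_dvd_iff_le_factorization hn).2 h3
  have hite : p ^ 2 ∣ if c then n / p else 0 := by split_ifs <;> simp [hsq]
  have : p ^ 2 ∣ p ^ 1 := by
    rw [pow_one, ← Nat.dvd_add_left hite]
    exact (pow_dvd_pow p h3.le).trans h
  exact absurd ((Nat.pow_dvd_pow_iff_le_right hp.one_lt).1 this) (by norm_num)

lemma div_mem_W {p n : ℕ} (P : ℕ → Prop) [DecidablePred P] (hp : p.Prime) (hpn : p ∣ n)
    (hn : n ≠ 0) (h : ∀ q ∈ n.primeFactors, ordProj[q] n ∣ p + if P q then n / q else 0) :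
    n / p ∈ W := by
  have hle :=
    factorization_le_two_of_ordProj_dvd hp hn (h p (Nat.mem_primeFactors.2 ⟨hp, hpn, hn⟩))
  set N := n / p
  have hnN : n = p * N := (Nat.mul_div_cancel' hpn).symm
  have hN : N ≠ 0 := (Nat.div_pos (Nat.le_of_dvd (Nat.pos_of_ne_zero hn) hpn) hp.pos).ne'
  refine ⟨Nat.pos_of_ne_zero hN, ?_⟩
  rw [add_comm, dvd_add_sum_div_iff hN subset_rfl]
  intro r hr
  rw [if_pos hr]
  obtain ⟨hrp, hrN, -⟩ := Nat.mem_primeFactors.mp hr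
  have hloc := h r (Nat.mem_primeFactors.2 ⟨hrp, hrN.trans (Nat.div_dvd_of_dvd hpn), hn⟩)
  have hfac : n.factorization r = N.factorization r + if p = r then 1 else 0 := by
    rw [hnN, Nat.factorization_mul hp.ne_zero hN, hp.factorization]
    simp [Finsupp.single_apply, add_comm]
  have hsplit : p + (if P r then n / r else 0) = p * (1 + if P r then N / r else 0) := by
    rw [hnN, Nat.mul_div_assoc p hrN]
    split_ifs <;> ring
  have hpos := hrp.factorization_pos_of_dvd hN hrN
  have key : ordProj[r] N ∣ 1 + if P r then N / r else 0 := by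
    rw [hsplit] at hloc
    rcases eq_or_ne p r with rfl | hne
    · rw [if_pos rfl] at hfac
      rw [show N.factorization p = 1 by omega, pow_one]
      rw [show n.factorization p = 1 + 1 by omega, pow_succ, pow_one] at hloc
      exact Nat.dvd_of_mul_dvd_mul_left hp.pos hloc
    · rw [if_neg hne, add_zero] at hfac
      rw [hfac] at hloc
      have hcop := Nat.Coprime.pow_left (N.factorization r) ((Nat.coprime_primes hrp hp).2 hne.symm)
      exact hcop.dvd_of_dvd_mul_left hloc
  split_ifs at key
  · exact key
  · exact absurd (Nat.dvd_one.1 key) (Nat.one_lt_pow hpos.ne' hrp.one_lt).ne'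

lemma dvd_and_not_sq_dvd_or_iff {p n : ℕ} (hp : p.Prime) (hn : n ≠ 0) :
    ((p ∣ n ∧ ¬ p ^ 2 ∣ n) ∨ (p ^ 2 ∣ n ∧ ¬ p ^ 3 ∣ n)) ↔
      p ∣ n ∧ n.factorization p ≤ 2 := by
  simp only [hp.dvd_iff_one_le_factorization hn, hp.pow_dvd_iff_le_factorization hn]
  omega

/-- For a prime `p` and a positive integer `n`: `n ∈ M_p^(1) ∪ M_p^(2)` if and only if
`p ∣ n`, `n/p ∈ 𝒲` and `p ∈ 𝔐_{n/p}`. -/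
theorem stmt_14 (p : ℕ) (hp : p.Prime) (n : ℕ) (hn : 0 < n) :
    (S n n ≡ p [MOD n] ∧
        ((p ∣ n ∧ ¬ p ^ 2 ∣ n) ∨ (p ^ 2 ∣ n ∧ ¬ p ^ 3 ∣ n))) ↔
      (p ∣ n ∧ n / p ∈ W ∧ p ∈ frakM (n / p)) := by
  have hloc : S n n ≡ p [MOD n] ↔
      ∀ q ∈ n.primeFactors, ordProj[q] n ∣ p + if (q - 1) ∣ n then n / q else 0 :=
    S_modEq_iff hn.ne' hn.ne' id
  rw [dvd_and_not_sq_dvd_or_iff hp hn.ne']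
  constructor
  · rintro ⟨hS, hpn, -⟩
    exact ⟨hpn, div_mem_W _ hp hpn hn.ne' (hloc.1 hS), hp.pos, by rwa [Nat.div_mul_cancel hpn]⟩
  · rintro ⟨hpn, -, -, hS⟩
    rw [Nat.div_mul_cancel hpn] at hS
    exact ⟨hS, hpn, factorization_le_two_of_ordProj_dvd hp hn.ne'
      (hloc.1 hS p (Nat.mem_primeFactors.2 ⟨hp, hpn, hn.ne'⟩))⟩
end
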